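/- arXiv:2009.02207 — 10 statements merged into one kernel-verified Lean document; each statement's English description precedes it below -/
import Mathlib

section
/- Let m > 0 be a real number and a_1,…,a_n ∈ [0,m] with x = ∑_{i=1}^n a_i. Then there exists a finitely supported probability distribution over vectors (ã_1,…,ã_n) ∈ [0,m]^n such that with probability 1: exactly ⌊x/m⌋ of the coordinates equal m, one coordinate equals x − ⌊x/m⌋·m, and all remaining coordinates equal 0; and for every i ∈ {1,…,n}, the expectation of ã_i equals a_i. -/
open Finset

def Good (n : ℕ) (m x : ℝ) (A : Fin n → ℝ) : Prop :=
  (∀ i, 0 ≤ A i ∧ A i ≤ m) ∧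
  {i | A i = m}.ncard = ⌊x / m⌋₊ ∧
  (∀ i, A i = m ∨ A i = 0 ∨ A i = x - (⌊x / m⌋₊ : ℝ) * m) ∧
  (∑ i, A i = x)

def Decomp (n : ℕ) (m x : ℝ) (a : Fin n → ℝ) : Prop :=
  ∃ (N : ℕ) (w : Fin N → ℝ) (A : Fin N → Fin n → ℝ),
    (∀ j, 0 ≤ w j) ∧ (∑ j, w j = 1) ∧
    (∀ j, 0 < w j → Good n m x (A j)) ∧
    (∀ i, ∑ j, w j * A j i = a i)

lemma decomp_of_good {n : ℕ} {m x : ℝ} {a : Fin n → ℝ} (h : Good n m x a) :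
    Decomp n m x a := by
  refine ⟨1, fun _ => 1, fun _ => a, fun _ => zero_le_one, by simp, fun _ _ => h, fun i => by simp⟩

lemma decomp_combine {n : ℕ} {m x : ℝ} {a b c : Fin n → ℝ} {lam : ℝ}
    (h0 : 0 ≤ lam) (h1 : lam ≤ 1)
    (hab : ∀ i, a i = lam * b i + (1 - lam) * c i)
    (hb : Decomp n m x b) (hc : Decomp n m x c) : Decomp n m x a := by
  obtain ⟨N₁, w₁, A₁, hw₁, hs₁, hg₁, he₁⟩ := hb
  obtain ⟨N₂, w₂, A₂, hw₂, hs₂, hg₂, he₂⟩ := hc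
  refine ⟨N₁ + N₂, Fin.append (fun j => lam * w₁ j) (fun j => (1 - lam) * w₂ j),
    Fin.append A₁ A₂, ?_, ?_, ?_, ?_⟩
  · intro j
    refine Fin.addCases (fun j => ?_) (fun j => ?_) j
    · rw [Fin.append_left]; exact mul_nonneg h0 (hw₁ j)
    · rw [Fin.append_right]; exact mul_nonneg (by linarith) (hw₂ j)
  · rw [Fin.sum_univ_add]
    simp only [Fin.append_left, Fin.append_right]
    rw [← Finset.mul_sum, ← Finset.mul_sum, hs₁, hs₂]; ring
  · intro j
    refine Fin.addCases (fun j hj => ?_) (fun j hj => ?_) j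
    · rw [Fin.append_left] at hj
      rw [Fin.append_left]
      apply hg₁
      rcases (hw₁ j).eq_or_lt with h | h
      · rw [← h, mul_zero] at hj; exact absurd hj (lt_irrefl 0)
      · exact h
    · rw [Fin.append_right] at hj
      rw [Fin.append_right]
      apply hg₂
      rcases (hw₂ j).eq_or_lt with h | h
      · rw [← h, mul_zero] at hj; exact absurd hj (lt_irrefl 0)
      · exact h
  · intro i
    rw [Fin.sum_univ_add]
    simp only [Fin.append_left, Fin.append_right, mul_assoc]
    rw [← Finset.mul_sum, ← Finset.mul_sum, he₁ i, he₂ i, ← hab i]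

lemma good_vertex (n : ℕ) (m : ℝ) (hm : 0 < m) (x : ℝ) (a : Fin n → ℝ)
    (ha : ∀ i, 0 ≤ a i ∧ a i ≤ m) (hx : ∑ i, a i = x)
    (hS : (univ.filter fun i => a i ≠ 0 ∧ a i ≠ m).card ≤ 1) :
    Good n m x a := by
  set K := univ.filter (fun i => a i = m) with hK
  set S := univ.filter (fun i => a i ≠ 0 ∧ a i ≠ m) with hSdef
  have hKcard : {i | a i = m}.ncard = K.card := by
    rw [← Set.ncard_coe_finset]; congr 1; ext t; simp [hK]
  have hzero : ∀ t, t ∉ S → a t ≠ m → a t = 0 := by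
    intro t ht hne
    simp only [hSdef, mem_filter, mem_univ, true_and, not_and, not_not] at ht
    by_contra h; exact hne (ht h)
  have h2 : ∑ t ∈ K, a t = K.card * m := by
    rw [Finset.sum_congr rfl (fun t ht => (mem_filter.1 ht).2), Finset.sum_const, nsmul_eq_mul]
  have h3 : ∑ t ∈ univ.filter (fun i => ¬ a i = m), a t = ∑ t ∈ S, a t := by
    refine (Finset.sum_subset ?_ ?_).symm
    · intro t ht
      simp only [hSdef, mem_filter, mem_univ, true_and] at ht ⊢
      exact ht.2
    · intro t ht hnt
      exact hzero t hnt (by simpa using (mem_filter.1 ht).2)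
  have hsplit : x = K.card * m + ∑ t ∈ S, a t := by
    rw [← hx, ← Finset.sum_filter_add_sum_filter_not univ (fun i => a i = m) a, h3, ← h2, hK]
  interval_cases hc : S.card
  · -- S empty
    have hSe : S = ∅ := Finset.card_eq_zero.1 hc
    rw [hSe, Finset.sum_empty, add_zero] at hsplit
    have hdm : x / m = (K.card : ℝ) := by
      rw [hsplit]; field_simp
    have hfl : ⌊x / m⌋₊ = K.card := by rw [hdm, Nat.floor_natCast]
    refine ⟨ha, by rw [hKcard, hfl], ?_, hx⟩
    intro i
    by_cases h : a i = m
    · exact Or.inl h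
    · exact Or.inr (Or.inl (hzero i (by simp [hSe]) h))
  · -- S singleton
    obtain ⟨j₀, hj₀⟩ := Finset.card_eq_one.1 hc
    have hj₀S : j₀ ∈ S := by simp [hj₀]
    simp only [hSdef, mem_filter, mem_univ, true_and] at hj₀S
    have ht0 : 0 < a j₀ := lt_of_le_of_ne (ha j₀).1 (Ne.symm hj₀S.1)
    have htm : a j₀ < m := lt_of_le_of_ne (ha j₀).2 hj₀S.2
    rw [hj₀, Finset.sum_singleton] at hsplit
    have hfl : ⌊x / m⌋₊ = K.card := by
      have hKc : (0:ℝ) ≤ (K.card:ℝ) := Nat.cast_nonneg _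
      rw [Nat.floor_eq_iff (div_nonneg (by nlinarith) hm.le)]
      constructor
      · rw [le_div_iff₀ hm]; linarith
      · rw [div_lt_iff₀ hm]; push_cast; nlinarith
    refine ⟨ha, by rw [hKcard, hfl], ?_, hx⟩
    intro i
    by_cases h : a i = m
    · exact Or.inl h
    by_cases h2 : i = j₀
    · subst h2
      refine Or.inr (Or.inr ?_)
      rw [hfl]; linarith
    · refine Or.inr (Or.inl (hzero i ?_ h))
      rw [hj₀]; simpa using h2

lemma decomp_of (n : ℕ) (m : ℝ) (hm : 0 < m) (x : ℝ) :
    ∀ k : ℕ, ∀ a : Fin n → ℝ,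
      (univ.filter fun i => a i ≠ 0 ∧ a i ≠ m).card ≤ k →
      (∀ i, 0 ≤ a i ∧ a i ≤ m) → (∑ i, a i = x) → Decomp n m x a := by
  intro k
  induction k with
  | zero =>
    intro a hcard ha hx
    exact decomp_of_good (good_vertex n m hm x a ha hx (le_trans hcard (Nat.zero_le 1)))
  | succ k ih =>
    intro a hcard ha hx
    by_cases hS1 : (univ.filter fun i => a i ≠ 0 ∧ a i ≠ m).card ≤ 1
    · exact decomp_of_good (good_vertex n m hm x a ha hx hS1)
    push_neg at hS1
    set S := univ.filter (fun i => a i ≠ 0 ∧ a i ≠ m) with hSdef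
    obtain ⟨i, hiS, j, hjS, hij⟩ := Finset.one_lt_card.1 hS1
    have hi := hiS; have hj := hjS
    simp only [hSdef, mem_filter, mem_univ, true_and] at hi hj
    have hai1 : 0 < a i := lt_of_le_of_ne (ha i).1 (Ne.symm hi.1)
    have hai2 : a i < m := lt_of_le_of_ne (ha i).2 hi.2
    have haj1 : 0 < a j := lt_of_le_of_ne (ha j).1 (Ne.symm hj.1)
    have haj2 : a j < m := lt_of_le_of_ne (ha j).2 hj.2
    set ε₁ := min (m - a i) (a j) with hε₁def
    set ε₂ := min (a i) (m - a j) with hε₂def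
    have hε₁ : 0 < ε₁ := lt_min (by linarith) haj1
    have hε₂ : 0 < ε₂ := lt_min hai1 (by linarith)
    have hε₁a : ε₁ ≤ m - a i := min_le_left _ _
    have hε₁b : ε₁ ≤ a j := min_le_right _ _
    have hε₂a : ε₂ ≤ a i := min_le_left _ _
    have hε₂b : ε₂ ≤ m - a j := min_le_right _ _
    set b := fun t => if t = i then a i + ε₁ else if t = j then a j - ε₁ else a t with hbdef
    set c := fun t => if t = i then a i - ε₂ else if t = j then a j + ε₂ else a t with hcdef
    set lam := ε₂ / (ε₁ + ε₂) with hlamdef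
    have hlam0 : 0 ≤ lam := div_nonneg hε₂.le (by linarith)
    have hlam1 : lam ≤ 1 := by
      rw [hlamdef, div_le_one (by linarith)]; linarith
    have hab : ∀ t, a t = lam * b t + (1 - lam) * c t := by
      intro t
      have hne : ε₁ + ε₂ ≠ 0 := by positivity
      rcases eq_or_ne t i with rfl | h1
      · simp only [hbdef, hcdef, hlamdef, if_pos rfl]
        field_simp; ring
      rcases eq_or_ne t j with rfl | h2
      · simp only [hbdef, hcdef, hlamdef, if_neg h1, if_pos rfl]
        field_simp; simp only [↓reduceIte]; ring
      · simp only [hbdef, hcdef, hlamdef, if_neg h1, if_neg h2]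
        field_simp
        ring
    -- bounds
    have hbbd : ∀ t, 0 ≤ b t ∧ b t ≤ m := by
      intro t
      rcases eq_or_ne t i with h1 | h1
      · have : b t = a i + ε₁ := by simp only [hbdef]; rw [if_pos h1]
        rw [this]; constructor <;> linarith
      rcases eq_or_ne t j with h2 | h2
      · have : b t = a j - ε₁ := by simp only [hbdef]; rw [if_neg h1, if_pos h2]
        rw [this]; constructor <;> linarith
      · have : b t = a t := by simp only [hbdef]; rw [if_neg h1, if_neg h2]
        rw [this]; exact ha t
    have hcbd : ∀ t, 0 ≤ c t ∧ c t ≤ m := by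
      intro t
      rcases eq_or_ne t i with h1 | h1
      · have : c t = a i - ε₂ := by simp only [hcdef]; rw [if_pos h1]
        rw [this]; constructor <;> linarith
      rcases eq_or_ne t j with h2 | h2
      · have : c t = a j + ε₂ := by simp only [hcdef]; rw [if_neg h1, if_pos h2]
        rw [this]; constructor <;> linarith
      · have : c t = a t := by simp only [hcdef]; rw [if_neg h1, if_neg h2]
        rw [this]; exact ha t
    -- sums
    have hsum_aux : ∀ (u v : ℝ), u + v = a i + a j →
        ∑ t, (if t = i then u else if t = j then v else a t) = x := by
      intro u v huv
      have hrw : ∀ t, (if t = i then u else if t = j then v else a t)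
          = a t + ((if t = i then u - a i else 0) + (if t = j then v - a j else 0)) := by
        intro t
        rcases eq_or_ne t i with rfl | h1
        · rw [if_pos rfl, if_pos rfl, if_neg hij]; ring
        rcases eq_or_ne t j with rfl | h2
        · rw [if_neg h1, if_pos rfl, if_neg h1, if_pos rfl]; ring
        · rw [if_neg h1, if_neg h2, if_neg h1, if_neg h2]; ring
      simp only [hrw]
      rw [Finset.sum_add_distrib, Finset.sum_add_distrib,
        Finset.sum_ite_eq' univ i (fun _ => u - a i), Finset.sum_ite_eq' univ j (fun _ => v - a j)]
      simp only [Finset.mem_univ, if_true, hx]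
      linarith
    have hbsum : ∑ t, b t = x := by
      rw [hbdef]; exact hsum_aux (a i + ε₁) (a j - ε₁) (by ring)
    have hcsum : ∑ t, c t = x := by
      rw [hcdef]; exact hsum_aux (a i - ε₂) (a j + ε₂) (by ring)
    -- cardinality decrease for b
    have hkey : ∀ (d : Fin n → ℝ), (∀ t, t ≠ i → t ≠ j → d t = a t) →
        (∀ p ∈ ({i, j} : Finset (Fin n)), True) →
        ∀ p, p ∈ S → (d p = 0 ∨ d p = m) →
        (univ.filter fun t => d t ≠ 0 ∧ d t ≠ m).card ≤ k := by
      intro d hd _ p hpS hpval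
      have hsub : (univ.filter fun t => d t ≠ 0 ∧ d t ≠ m) ⊆ S.erase p := by
        intro t ht
        simp only [mem_filter, mem_univ, true_and] at ht
        have htp : t ≠ p := by
          rintro rfl
          rcases hpval with h | h
          · exact ht.1 h
          · exact ht.2 h
        rw [Finset.mem_erase]
        refine ⟨htp, ?_⟩
        rcases eq_or_ne t i with rfl | h1
        · exact hiS
        rcases eq_or_ne t j with rfl | h2
        · exact hjS
        · rw [hd t h1 h2] at ht
          simp only [hSdef, mem_filter, mem_univ, true_and]
          exact ht
      calc (univ.filter fun t => d t ≠ 0 ∧ d t ≠ m).card ≤ (S.erase p).card :=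
            Finset.card_le_card hsub
        _ = S.card - 1 := Finset.card_erase_of_mem hpS
        _ ≤ k := by omega
    have hbne : ∀ t, t ≠ i → t ≠ j → b t = a t := by
      intro t h1 h2; simp only [hbdef]; rw [if_neg h1, if_neg h2]
    have hcne : ∀ t, t ≠ i → t ≠ j → c t = a t := by
      intro t h1 h2; simp only [hcdef]; rw [if_neg h1, if_neg h2]
    have hbcard : (univ.filter fun t => b t ≠ 0 ∧ b t ≠ m).card ≤ k := by
      rcases min_cases (m - a i) (a j) with ⟨hmin, _⟩ | ⟨hmin, _⟩
      · refine hkey b hbne (fun _ _ => trivial) i hiS (Or.inr ?_)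
        have hbi : b i = a i + ε₁ := by simp [hbdef]
        rw [hbi, hε₁def, hmin]; ring
      · refine hkey b hbne (fun _ _ => trivial) j hjS (Or.inl ?_)
        have hbj : b j = a j - ε₁ := by simp [hbdef, Ne.symm hij]
        rw [hbj, hε₁def, hmin]; ring
    have hccard : (univ.filter fun t => c t ≠ 0 ∧ c t ≠ m).card ≤ k := by
      rcases min_cases (a i) (m - a j) with ⟨hmin, _⟩ | ⟨hmin, _⟩
      · refine hkey c hcne (fun _ _ => trivial) i hiS (Or.inl ?_)
        have hci : c i = a i - ε₂ := by simp [hcdef]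
        rw [hci, hε₂def, hmin]; ring
      · refine hkey c hcne (fun _ _ => trivial) j hjS (Or.inr ?_)
        have hcj : c j = a j + ε₂ := by simp [hcdef, Ne.symm hij]
        rw [hcj, hε₂def, hmin]; ring
    exact decomp_combine hlam0 hlam1 hab (ih b hbcard hbbd hbsum) (ih c hccard hcbd hcsum)

/-- Dependent rounding: given `a i ∈ [0, m]` with sum `x`, there is a finitely
supported probability distribution over vectors in `[0,m]^n` such that almost surely
exactly `⌊x/m⌋` coordinates equal `m`, one coordinate equals `x - ⌊x/m⌋·m`, the rest
are `0`, and each coordinate has expectation `a i`. -/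
theorem dependent_rounding (n : ℕ) (m : ℝ) (hm : 0 < m) (a : Fin n → ℝ)
    (ha : ∀ i, 0 ≤ a i ∧ a i ≤ m) (x : ℝ) (hx : x = ∑ i, a i) :
    ∃ (N : ℕ) (w : Fin N → ℝ) (A : Fin N → Fin n → ℝ),
      (∀ j, 0 ≤ w j) ∧ (∑ j, w j = 1) ∧
      (∀ j, 0 < w j →
        (∀ i, 0 ≤ A j i ∧ A j i ≤ m) ∧
        {i | A j i = m}.ncard = ⌊x / m⌋₊ ∧
        (∀ i, A j i = m ∨ A j i = 0 ∨ A j i = x - (⌊x / m⌋₊ : ℝ) * m) ∧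
        (∑ i, A j i = x)) ∧
      (∀ i, ∑ j, w j * A j i = a i) := by
  obtain ⟨N, w, A, h1, h2, h3, h4⟩ :=
    decomp_of n m hm x (univ.filter fun i => a i ≠ 0 ∧ a i ≠ m).card a le_rfl ha hx.symm
  exact ⟨N, w, A, h1, h2, h3, h4⟩
end

section
/- Let k, n ∈ ℕ with 1 ≤ k ≤ n and let a_1,…,a_n ∈ [0,1] with ∑_{i=1}^n a_i = k. Then there exists a finitely supported probability distribution over subsets S ⊆ {1,…,n} such that with probability 1 the subset S has exactly k elements, and for every i ∈ {1,…,n} the probability that i ∈ S equals a_i. -/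
open Finset

private lemma exists_cohort (m : ℕ) : ∀ (n k : ℕ) (a : Fin n → ℝ),
    (∀ i, 0 ≤ a i ∧ a i ≤ 1) → ∑ i, a i = k →
    (Finset.univ.filter (fun i => a i ≠ 0 ∧ a i ≠ 1)).card ≤ m →
    ∃ (N : ℕ) (w : Fin N → ℝ) (S : Fin N → Finset (Fin n)),
      (∀ j, 0 ≤ w j) ∧ (∑ j, w j = 1) ∧
      (∀ j, 0 < w j → (S j).card = k) ∧
      (∀ i, ∑ j, (if i ∈ S j then w j else 0) = a i) := by
  induction m with
  | zero =>
    intro n k a ha hsum hcard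
    have hF : (Finset.univ.filter (fun i => a i ≠ 0 ∧ a i ≠ 1)) = ∅ :=
      Finset.card_eq_zero.mp (Nat.le_zero.mp hcard)
    have hz : ∀ i, a i = 0 ∨ a i = 1 := by
      intro i
      by_contra h
      push_neg at h
      have : i ∈ (Finset.univ.filter (fun i => a i ≠ 0 ∧ a i ≠ 1)) := by
        simp [h.1, h.2]
      simp [hF] at this
    set T := Finset.univ.filter (fun i => a i = 1) with hT
    have hsumT : ∑ i, a i = (T.card : ℝ) := by
      have : ∑ i, a i = ∑ i, (if a i = 1 then (1:ℝ) else 0) := by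
        refine Finset.sum_congr rfl fun i _ => ?_
        rcases hz i with h | h <;> simp [h]
      rw [this, Finset.sum_boole, hT]
    have hTk : T.card = k := by
      have : (T.card : ℝ) = (k : ℝ) := by rw [← hsumT, hsum]
      exact_mod_cast this
    refine ⟨1, fun _ => 1, fun _ => T, fun _ => zero_le_one, by simp, fun _ _ => hTk, ?_⟩
    intro i
    rcases hz i with h | h
    · have : i ∉ T := by simp [hT, h]
      simp [this, h]
    · have : i ∈ T := by simp [hT, h]
      simp [this, h]
  | succ m ih =>
    intro n k a ha hsum hcard
    set F := Finset.univ.filter (fun i => a i ≠ 0 ∧ a i ≠ 1) with hF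
    by_cases hle : F.card ≤ m
    · exact ih n k a ha hsum hle
    push_neg at hle
    have hFne : F.Nonempty := Finset.card_pos.mp (lt_of_le_of_lt (Nat.zero_le m) hle)
    obtain ⟨i, hiF⟩ := hFne
    -- there is a second fractional coordinate
    have hsecond : ∃ j ∈ F, j ≠ i := by
      by_contra h
      push_neg at h
      -- all coordinates other than i are 0 or 1
      have hz : ∀ x, x ≠ i → (a x = 0 ∨ a x = 1) := by
        intro x hx
        by_contra hc
        push_neg at hc
        have : x ∈ F := by simp [hF, hc.1, hc.2]
        exact hx (h x this)
      set c := ((Finset.univ.erase i).filter (fun x => a x = 1)).card with hc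
      have hsum' : ∑ x ∈ Finset.univ.erase i, a x = (c : ℝ) := by
        have : ∑ x ∈ Finset.univ.erase i, a x
            = ∑ x ∈ Finset.univ.erase i, (if a x = 1 then (1:ℝ) else 0) := by
          refine Finset.sum_congr rfl fun x hx => ?_
          rcases hz x (Finset.ne_of_mem_erase hx) with h1 | h1 <;> simp [h1]
        rw [this, Finset.sum_boole, hc]
      have hai : a i + (c : ℝ) = (k : ℝ) := by
        rw [← hsum', ← hsum]
        exact Finset.add_sum_erase Finset.univ a (Finset.mem_univ i)
      have hi01 : a i ≠ 0 ∧ a i ≠ 1 := by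
        have := hiF; rw [hF, Finset.mem_filter] at this; exact this.2
      have hi0 : 0 < a i := lt_of_le_of_ne (ha i).1 (Ne.symm hi01.1)
      have hi1 : a i < 1 := lt_of_le_of_ne (ha i).2 hi01.2
      have hck : c < k := by
        have : (c : ℝ) < (k : ℝ) := by linarith
        exact_mod_cast this
      have : (c : ℝ) + 1 ≤ (k : ℝ) := by exact_mod_cast hck
      linarith
    obtain ⟨j, hjF, hji⟩ := hsecond
    have hi01 : a i ≠ 0 ∧ a i ≠ 1 := by
      have := hiF; rw [hF, Finset.mem_filter] at this; exact this.2
    have hj01 : a j ≠ 0 ∧ a j ≠ 1 := by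
      have := hjF; rw [hF, Finset.mem_filter] at this; exact this.2
    have hi0 : 0 < a i := lt_of_le_of_ne (ha i).1 (Ne.symm hi01.1)
    have hi1 : a i < 1 := lt_of_le_of_ne (ha i).2 hi01.2
    have hj0 : 0 < a j := lt_of_le_of_ne (ha j).1 (Ne.symm hj01.1)
    have hj1 : a j < 1 := lt_of_le_of_ne (ha j).2 hj01.2
    set t1 := min (1 - a i) (a j) with ht1def
    set t2 := min (a i) (1 - a j) with ht2def
    have ht1 : 0 < t1 := lt_min (by linarith) hj0
    have ht2 : 0 < t2 := lt_min hi0 (by linarith)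
    have ht1a : t1 ≤ 1 - a i := min_le_left _ _
    have ht1b : t1 ≤ a j := min_le_right _ _
    have ht2a : t2 ≤ a i := min_le_left _ _
    have ht2b : t2 ≤ 1 - a j := min_le_right _ _
    set b := fun x => a x + (if x = i then t1 else if x = j then -t1 else 0) with hbdef
    set c := fun x => a x + (if x = i then -t2 else if x = j then t2 else 0) with hcdef
    have hbi : b i = a i + t1 := by simp [hbdef]
    have hbj : b j = a j - t1 := by simp [hbdef, hji]; ring
    have hci : c i = a i - t2 := by simp [hcdef]; ring
    have hcj : c j = a j + t2 := by simp [hcdef, hji]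
    have hbo : ∀ x, x ≠ i → x ≠ j → b x = a x := by
      intro x h1 h2; simp [hbdef, h1, h2]
    have hco : ∀ x, x ≠ i → x ≠ j → c x = a x := by
      intro x h1 h2; simp [hcdef, h1, h2]
    -- bounds for b and c
    have hb01 : ∀ x, 0 ≤ b x ∧ b x ≤ 1 := by
      intro x
      by_cases h1 : x = i
      · subst h1; rw [hbi]; constructor <;> [linarith; linarith]
      by_cases h2 : x = j
      · subst h2; rw [hbj]; constructor <;> [linarith; linarith]
      · rw [hbo x h1 h2]; exact ha x
    have hc01 : ∀ x, 0 ≤ c x ∧ c x ≤ 1 := by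
      intro x
      by_cases h1 : x = i
      · subst h1; rw [hci]; constructor <;> [linarith; linarith]
      by_cases h2 : x = j
      · subst h2; rw [hcj]; constructor <;> [linarith; linarith]
      · rw [hco x h1 h2]; exact ha x
    -- sums
    have hpairsum : ∀ (t : ℝ), ∑ x : Fin n,
        (if x = i then t else if x = j then -t else 0) = 0 := by
      intro t
      have key : ∑ x : Fin n, (if x = i then t else if x = j then -t else 0)
          = ∑ x ∈ ({i, j} : Finset (Fin n)),
              (if x = i then t else if x = j then -t else 0) := by
        refine (Finset.sum_subset (Finset.subset_univ _) ?_).symm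
        intro x _ hx
        simp only [Finset.mem_insert, Finset.mem_singleton, not_or] at hx
        simp [hx.1, hx.2]
      rw [key, Finset.sum_pair (Ne.symm hji)]
      simp [hji]
    have hbsum : ∑ x, b x = k := by
      simp only [hbdef]
      rw [Finset.sum_add_distrib, hsum, hpairsum t1, add_zero]
    have hcsum : ∑ x, c x = k := by
      have : ∑ x : Fin n, (if x = i then -t2 else if x = j then t2 else 0) = 0 := by
        have := hpairsum (-t2)
        simpa using this
      simp only [hcdef]
      rw [Finset.sum_add_distrib, hsum, this, add_zero]
    -- fractional sets shrink
    have hFb : (Finset.univ.filter (fun x => b x ≠ 0 ∧ b x ≠ 1)).card ≤ m := by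
      have hsub : ∀ x, x ≠ i → x ≠ j →
          (b x ≠ 0 ∧ b x ≠ 1) → x ∈ F := by
        intro x h1 h2 h3
        rw [hbo x h1 h2] at h3
        simp [hF, h3.1, h3.2]
      have hkill : i ∉ (Finset.univ.filter (fun x => b x ≠ 0 ∧ b x ≠ 1)) ∨
          j ∉ (Finset.univ.filter (fun x => b x ≠ 0 ∧ b x ≠ 1)) := by
        rcases min_cases (1 - a i) (a j) with ⟨h, _⟩ | ⟨h, _⟩
        · left
          have : b i = 1 := by rw [hbi, ht1def, h]; ring
          simp [this]
        · right
          have : b j = 0 := by rw [hbj, ht1def, h]; ring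
          simp [this]
      rcases hkill with hk' | hk'
      · have hsub' : (Finset.univ.filter (fun x => b x ≠ 0 ∧ b x ≠ 1)) ⊆ F.erase i := by
          intro x hx
          rw [Finset.mem_filter] at hx
          have hxi : x ≠ i := by rintro rfl; exact hk' (by simp [hx.2.1, hx.2.2])
          refine Finset.mem_erase.mpr ⟨hxi, ?_⟩
          by_cases h2 : x = j
          · subst h2; exact hjF
          · exact hsub x hxi h2 hx.2
        calc (Finset.univ.filter (fun x => b x ≠ 0 ∧ b x ≠ 1)).card
            ≤ (F.erase i).card := Finset.card_le_card hsub'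
          _ = F.card - 1 := Finset.card_erase_of_mem hiF
          _ ≤ (m + 1) - 1 := Nat.sub_le_sub_right hcard 1
          _ = m := rfl
      · have hsub' : (Finset.univ.filter (fun x => b x ≠ 0 ∧ b x ≠ 1)) ⊆ F.erase j := by
          intro x hx
          rw [Finset.mem_filter] at hx
          have hxj : x ≠ j := by rintro rfl; exact hk' (by simp [hx.2.1, hx.2.2])
          refine Finset.mem_erase.mpr ⟨hxj, ?_⟩
          by_cases h1 : x = i
          · subst h1; exact hiF
          · exact hsub x h1 hxj hx.2
        calc (Finset.univ.filter (fun x => b x ≠ 0 ∧ b x ≠ 1)).card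
            ≤ (F.erase j).card := Finset.card_le_card hsub'
          _ = F.card - 1 := Finset.card_erase_of_mem hjF
          _ ≤ (m + 1) - 1 := Nat.sub_le_sub_right hcard 1
          _ = m := rfl
    have hFc : (Finset.univ.filter (fun x => c x ≠ 0 ∧ c x ≠ 1)).card ≤ m := by
      have hsub : ∀ x, x ≠ i → x ≠ j →
          (c x ≠ 0 ∧ c x ≠ 1) → x ∈ F := by
        intro x h1 h2 h3
        rw [hco x h1 h2] at h3
        simp [hF, h3.1, h3.2]
      have hkill : i ∉ (Finset.univ.filter (fun x => c x ≠ 0 ∧ c x ≠ 1)) ∨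
          j ∉ (Finset.univ.filter (fun x => c x ≠ 0 ∧ c x ≠ 1)) := by
        rcases min_cases (a i) (1 - a j) with ⟨h, _⟩ | ⟨h, _⟩
        · left
          have : c i = 0 := by rw [hci, ht2def, h]; ring
          simp [this]
        · right
          have : c j = 1 := by rw [hcj, ht2def, h]; ring
          simp [this]
      rcases hkill with hk' | hk'
      · have hsub' : (Finset.univ.filter (fun x => c x ≠ 0 ∧ c x ≠ 1)) ⊆ F.erase i := by
          intro x hx
          rw [Finset.mem_filter] at hx
          have hxi : x ≠ i := by rintro rfl; exact hk' (by simp [hx.2.1, hx.2.2])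
          refine Finset.mem_erase.mpr ⟨hxi, ?_⟩
          by_cases h2 : x = j
          · subst h2; exact hjF
          · exact hsub x hxi h2 hx.2
        calc (Finset.univ.filter (fun x => c x ≠ 0 ∧ c x ≠ 1)).card
            ≤ (F.erase i).card := Finset.card_le_card hsub'
          _ = F.card - 1 := Finset.card_erase_of_mem hiF
          _ ≤ (m + 1) - 1 := Nat.sub_le_sub_right hcard 1
          _ = m := rfl
      · have hsub' : (Finset.univ.filter (fun x => c x ≠ 0 ∧ c x ≠ 1)) ⊆ F.erase j := by
          intro x hx
          rw [Finset.mem_filter] at hx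
          have hxj : x ≠ j := by rintro rfl; exact hk' (by simp [hx.2.1, hx.2.2])
          refine Finset.mem_erase.mpr ⟨hxj, ?_⟩
          by_cases h1 : x = i
          · subst h1; exact hiF
          · exact hsub x h1 hxj hx.2
        calc (Finset.univ.filter (fun x => c x ≠ 0 ∧ c x ≠ 1)).card
            ≤ (F.erase j).card := Finset.card_le_card hsub'
          _ = F.card - 1 := Finset.card_erase_of_mem hjF
          _ ≤ (m + 1) - 1 := Nat.sub_le_sub_right hcard 1
          _ = m := rfl
    obtain ⟨N₁, w₁, S₁, hw₁, hs₁, hc₁, hm₁⟩ := ih n k b hb01 hbsum hFb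
    obtain ⟨N₂, w₂, S₂, hw₂, hs₂, hc₂, hm₂⟩ := ih n k c hc01 hcsum hFc
    set lam := t2 / (t1 + t2) with hlamdef
    have htsum : (0:ℝ) < t1 + t2 := by linarith
    have hl0 : 0 < lam := div_pos ht2 htsum
    have hl1 : lam < 1 := by
      rw [hlamdef, div_lt_one htsum]; linarith
    have key : lam * (t1 + t2) = t2 := div_mul_cancel₀ _ (ne_of_gt htsum)
    have hconv : ∀ x, lam * b x + (1 - lam) * c x = a x := by
      intro x
      by_cases h1 : x = i
      · subst h1; rw [hbi, hci]; linear_combination key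
      by_cases h2 : x = j
      · subst h2; rw [hbj, hcj]; linear_combination -key
      · rw [hbo x h1 h2, hco x h1 h2]; ring
    refine ⟨N₁ + N₂,
      Fin.addCases (fun j => lam * w₁ j) (fun j => (1 - lam) * w₂ j),
      Fin.addCases S₁ S₂, ?_, ?_, ?_, ?_⟩
    · refine Fin.addCases ?_ ?_ <;> intro p <;> simp only [Fin.addCases_left, Fin.addCases_right]
      · exact mul_nonneg (le_of_lt hl0) (hw₁ p)
      · exact mul_nonneg (by linarith) (hw₂ p)
    · rw [Fin.sum_univ_add]
      simp only [Fin.addCases_left, Fin.addCases_right]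
      rw [← Finset.mul_sum, ← Finset.mul_sum, hs₁, hs₂]; ring
    · refine Fin.addCases ?_ ?_ <;> intro p <;>
        simp only [Fin.addCases_left, Fin.addCases_right] <;> intro hp
      · refine hc₁ p ?_
        rcases (hw₁ p).lt_or_eq with h | h
        · exact h
        · rw [← h] at hp; simp at hp
      · refine hc₂ p ?_
        rcases (hw₂ p).lt_or_eq with h | h
        · exact h
        · rw [← h] at hp; simp at hp
    · intro x
      rw [Fin.sum_univ_add]
      simp only [Fin.addCases_left, Fin.addCases_right]
      have e1 : ∑ p : Fin N₁, (if x ∈ S₁ p then lam * w₁ p else 0)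
          = lam * b x := by
        rw [← hm₁ x, Finset.mul_sum]
        exact Finset.sum_congr rfl fun p _ => by rw [mul_ite, mul_zero]
      have e2 : ∑ p : Fin N₂, (if x ∈ S₂ p then (1 - lam) * w₂ p else 0)
          = (1 - lam) * c x := by
        rw [← hm₂ x, Finset.mul_sum]
        exact Finset.sum_congr rfl fun p _ => by rw [mul_ite, mul_zero]
      rw [e1, e2, hconv x]

/-- RoundProb: given marginals `a i ∈ [0,1]` summing to the integer `k`, there is a
finitely supported probability distribution over subsets of `{1,…,n}` which almost
surely has exactly `k` elements and selects each `i` with probability `a i`. -/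
theorem round_prob_cohort (k n : ℕ) (hk : 1 ≤ k) (hkn : k ≤ n) (a : Fin n → ℝ)
    (ha : ∀ i, 0 ≤ a i ∧ a i ≤ 1) (hsum : ∑ i, a i = k) :
    ∃ (N : ℕ) (w : Fin N → ℝ) (S : Fin N → Finset (Fin n)),
      (∀ j, 0 ≤ w j) ∧ (∑ j, w j = 1) ∧
      (∀ j, 0 < w j → (S j).card = k) ∧
      (∀ i, ∑ j, (if i ∈ S j then w j else 0) = a i) := by
  exact exists_cohort n n k a ha hsum ((Finset.card_filter_le _ _).trans (by simp))
end

section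
/- Let k, n ∈ ℕ with 1 ≤ k ≤ n, let s_1,…,s_n ∈ [0,1] with ∑_i s_i ≤ k, let c ≥ 0, and define p_i = min(s_i + c, 1), assuming ∑_{i=1}^n p_i = k. Then for every vector q ∈ [0,1]^n satisfying ∑_{i=1}^n q_i ≤ k and |q_i − q_j| ≤ |s_i − s_j| for all i, j, one has ∑_{i=1}^n q_i s_i ≤ ∑_{i=1}^n p_i s_i. That is, the upward water-filling solution maximizes the linear utility among all fairness-preserving marginal selection probability vectors. -/
/-!
Write `d = q - p`; then `∑ d ≤ 0`. Fairness makes `q - s` non-increasing in `s`, while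
`p - s = min c (1 - s)`, so wherever `d j < 0`, every `i` with a larger score has `d i ≤ 0`
(either `p i = 1 ≥ q i`, or `d i ≤ d j`). Hence `d` changes sign at most once, from `+` to `-`,
at some level `τ ≥ 0`, and `∑ d i * s i = ∑ d i * (s i - τ) + τ ∑ d i ≤ 0`.
-/

open Finset

theorem Finset.sum_mul_nonpos_of_sign_change {ι : Type*} (S : Finset ι) {d s : ι → ℝ} {τ : ℝ}
    (hτ : 0 ≤ τ) (hd : ∑ i ∈ S, d i ≤ 0) (hcross : ∀ i ∈ S, d i * (s i - τ) ≤ 0) :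
    ∑ i ∈ S, d i * s i ≤ 0 := by
  have hsplit : ∑ i ∈ S, d i * s i = ∑ i ∈ S, d i * (s i - τ) + τ * ∑ i ∈ S, d i := by
    rw [mul_sum, ← sum_add_distrib]
    exact sum_congr rfl fun i _ => by ring
  rw [hsplit]
  exact add_nonpos (sum_nonpos hcross) (mul_nonpos_of_nonneg_of_nonpos hτ hd)

theorem Fintype.sum_mul_nonpos_of_single_crossing {ι : Type*} [Fintype ι] {d s : ι → ℝ}
    (hs : ∀ i, 0 ≤ s i) (hd : ∑ i, d i ≤ 0)
    (hcross : ∀ i j, s j ≤ s i → d j < 0 → d i ≤ 0) :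
    ∑ i, d i * s i ≤ 0 := by
  by_cases hneg : ∃ j, d j < 0
  · obtain ⟨j₀, hj₀, hmin⟩ := (univ.filter fun j => d j < 0).exists_min_image s
      (by simpa [Finset.Nonempty] using hneg)
    refine univ.sum_mul_nonpos_of_sign_change (hs j₀) hd fun i _ => ?_
    rcases le_or_gt (s j₀) (s i) with hle | hlt
    · exact mul_nonpos_of_nonpos_of_nonneg (hcross i j₀ hle (by simpa using hj₀)) (by linarith)
    · have hdi : 0 ≤ d i := by
        by_contra! hdi
        exact hlt.not_ge (hmin i (by simpa using hdi))
      exact mul_nonpos_of_nonneg_of_nonpos hdi (by linarith)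
  · simp only [not_exists, not_lt] at hneg
    -- with `d ≥ 0`, any level `τ` above all scores works
    refine univ.sum_mul_nonpos_of_sign_change (τ := ∑ j, s j)
      (Finset.sum_nonneg fun j _ => hs j) hd fun i hi => ?_
    exact mul_nonpos_of_nonneg_of_nonpos (hneg i)
      (sub_nonpos.mpr (single_le_sum (fun j _ => hs j) hi))

theorem le_min_add_one_of_lt_min_add_one {a b c x y : ℝ} (hy : y ≤ 1)
    (hfair : y - x ≤ b - a) (hx : x < min (a + c) 1) : y ≤ min (b + c) 1 :=
  le_min (by linarith [min_le_left (a + c) 1]) hy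

theorem waterfill_up_optimal_linear_general (k n : ℕ)
    (s : Fin n → ℝ) (hs : ∀ i, 0 ≤ s i ∧ s i ≤ 1)
    (c : ℝ) (p : Fin n → ℝ) (hp : ∀ i, p i = min (s i + c) 1)
    (hpk : ∑ i, p i = k) :
    ∀ q : Fin n → ℝ, (∀ i, 0 ≤ q i ∧ q i ≤ 1) → (∑ i, q i ≤ k) →
      (∀ i j, |q i - q j| ≤ |s i - s j|) →
      ∑ i, q i * s i ≤ ∑ i, p i * s i := by
  intro q hq hqk hfair
  have hdeficit : ∑ i, (q i - p i) ≤ 0 := by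
    rw [sum_sub_distrib, hpk]
    linarith
  have hcross : ∀ i j, s j ≤ s i → q j - p j < 0 → q i - p i ≤ 0 := by
    intro i j hji hj
    rw [hp] at hj ⊢
    refine sub_nonpos.mpr (le_min_add_one_of_lt_min_add_one (hq i).2 ?_ (sub_neg.mp hj))
    calc q i - q j ≤ |q i - q j| := le_abs_self _
      _ ≤ |s i - s j| := hfair i j
      _ = s i - s j := abs_of_nonneg (sub_nonneg.mpr hji)
  have hmain := Fintype.sum_mul_nonpos_of_single_crossing (fun i => (hs i).1) hdeficit hcross
  simp only [sub_mul, sum_sub_distrib] at hmain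
  linarith

/-- Optimality of upward water-filling for linear utility: if `∑ s ≤ k` and
`p i = min (s i + c) 1` sums to `k`, then `p` maximizes `∑ q i * s i` over all
fairness-preserving marginal vectors `q ∈ [0,1]^n` with `∑ q ≤ k`. -/
theorem waterfill_up_optimal_linear (k n : ℕ) (hk : 1 ≤ k) (hkn : k ≤ n)
    (s : Fin n → ℝ) (hs : ∀ i, 0 ≤ s i ∧ s i ≤ 1) (hsum : ∑ i, s i ≤ k)
    (c : ℝ) (hc : 0 ≤ c) (p : Fin n → ℝ) (hp : ∀ i, p i = min (s i + c) 1)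
    (hpk : ∑ i, p i = k) :
    ∀ q : Fin n → ℝ, (∀ i, 0 ≤ q i ∧ q i ≤ 1) → (∑ i, q i ≤ k) →
      (∀ i j, |q i - q j| ≤ |s i - s j|) →
      ∑ i, q i * s i ≤ ∑ i, p i * s i :=
  waterfill_up_optimal_linear_general k n s hs c p hp hpk
end

section
/- Let k, n ∈ ℕ with 1 ≤ k ≤ n, let s_1,…,s_n ∈ [0,1] with ∑_i s_i ≥ k, let c ≥ 0, and define p_i = max(s_i − c, 0), assuming ∑_{i=1}^n p_i = k. Then for every vector q ∈ [0,1]^n satisfying ∑_{i=1}^n q_i ≤ k and |q_i − q_j| ≤ |s_i − s_j| for all i, j, one has ∑_{i=1}^n q_i s_i ≤ ∑_{i=1}^n p_i s_i. That is, the downward water-filling solution maximizes the linear utility among all fairness-preserving marginal selection probability vectors. -/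
/-- Optimality of downward water-filling for linear utility: if `∑ s ≥ k` and
`p i = max (s i - c) 0` sums to `k`, then `p` maximizes `∑ q i * s i` over all
fairness-preserving marginal vectors `q ∈ [0,1]^n` with `∑ q ≤ k`. -/
theorem waterfill_down_optimal_linear (k n : ℕ) (hk : 1 ≤ k) (hkn : k ≤ n)
    (s : Fin n → ℝ) (hs : ∀ i, 0 ≤ s i ∧ s i ≤ 1) (hsum : (k : ℝ) ≤ ∑ i, s i)
    (c : ℝ) (hc : 0 ≤ c) (p : Fin n → ℝ) (hp : ∀ i, p i = max (s i - c) 0)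
    (hpk : ∑ i, p i = k) :
    ∀ q : Fin n → ℝ, (∀ i, 0 ≤ q i ∧ q i ≤ 1) → (∑ i, q i ≤ k) →
      (∀ i j, |q i - q j| ≤ |s i - s j|) →
      ∑ i, q i * s i ≤ ∑ i, p i * s i := by
  intro q hq hqk hfair
  set r : Fin n → ℝ := fun i => q i - p i with hr
  -- reduce to ∑ r i * s i ≤ 0
  have key : ∑ i, r i * s i ≤ 0 := by
    have hdecomp : ∀ i, r i * s i = r i * (s i - c) + c * r i := by
      intro i; ring
    rw [Finset.sum_congr rfl (fun i _ => hdecomp i), Finset.sum_add_distrib,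
      ← Finset.mul_sum]
    have hrsum : ∑ i, r i ≤ 0 := by
      have : ∑ i, r i = (∑ i, q i) - (∑ i, p i) := by
        simp [hr, Finset.sum_sub_distrib]
      rw [this, hpk]; linarith
    have h2 : c * ∑ i, r i ≤ 0 := mul_nonpos_of_nonneg_of_nonpos hc hrsum
    -- split the first sum over A = {i | c < s i}
    set A : Finset (Fin n) := Finset.univ.filter (fun i => c < s i) with hA
    have hsplit : ∑ i, r i * (s i - c) =
        (∑ i ∈ A, r i * (s i - c)) + ∑ i ∈ Aᶜ, r i * (s i - c) :=
      (Finset.sum_add_sum_compl A _).symm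
    -- on Aᶜ: p i = 0, r i = q i ≥ 0, s i - c ≤ 0
    have hcompl : ∑ i ∈ Aᶜ, r i * (s i - c) ≤ 0 := by
      apply Finset.sum_nonpos
      intro i hi
      have hsi : s i ≤ c := by
        simp [hA, Finset.mem_compl, Finset.mem_filter] at hi
        linarith [hi]
      have hpi : p i = 0 := by
        rw [hp i]; exact max_eq_right (by linarith)
      have hri : 0 ≤ r i := by simp [hr, hpi]; exact (hq i).1
      exact mul_nonpos_of_nonneg_of_nonpos hri (by linarith)
    -- on A : r antivaries with s - c
    have hanti : AntivaryOn r (fun i => s i - c) (A : Set (Fin n)) := by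
      intro i hi j hj hlt
      simp only [Finset.coe_filter, Set.mem_setOf_eq, hA, Finset.mem_coe,
        Finset.mem_filter] at hi hj
      have hci : c < s i := hi.2
      have hcj : c < s j := hj.2
      have hsij : s i < s j := by dsimp at hlt; linarith
      have hpi : p i = s i - c := by rw [hp i]; exact max_eq_left (by linarith)
      have hpj : p j = s j - c := by rw [hp j]; exact max_eq_left (by linarith)
      have := hfair j i
      rw [abs_of_nonneg (by linarith : (0:ℝ) ≤ s j - s i)] at this
      have hqle : q j - q i ≤ s j - s i := (abs_le.mp this).2
      simp only [hr, hpi, hpj]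
      linarith
    -- ∑_A r ≤ 0
    have hrA : ∑ i ∈ A, r i ≤ 0 := by
      have hcomplr : 0 ≤ ∑ i ∈ Aᶜ, r i := by
        apply Finset.sum_nonneg
        intro i hi
        have hsi : s i ≤ c := by
          simp [hA, Finset.mem_compl, Finset.mem_filter] at hi
          linarith [hi]
        have hpi : p i = 0 := by
          rw [hp i]; exact max_eq_right (by linarith)
        simp [hr, hpi]; exact (hq i).1
      have := Finset.sum_add_sum_compl A r
      linarith
    have hwA : 0 ≤ ∑ i ∈ A, (s i - c) := by
      apply Finset.sum_nonneg
      intro i hi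
      simp [hA, Finset.mem_filter] at hi
      linarith
    have hcheb := hanti.card_mul_sum_le_sum_mul_sum
    have hAsum : ∑ i ∈ A, r i * (s i - c) ≤ 0 := by
      rcases Nat.eq_zero_or_pos A.card with h0 | hpos
      · rw [Finset.card_eq_zero] at h0
        simp [h0]
      · have hrhs : (∑ i ∈ A, r i) * ∑ i ∈ A, (s i - c) ≤ 0 :=
          mul_nonpos_of_nonpos_of_nonneg hrA hwA
        have hcard : (0:ℝ) < (A.card : ℝ) := by exact_mod_cast hpos
        nlinarith
    linarith
  have : ∑ i, q i * s i = (∑ i, r i * s i) + ∑ i, p i * s i := by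
    rw [← Finset.sum_add_distrib]
    apply Finset.sum_congr rfl
    intro i _
    simp [hr]; ring
  linarith
end

section
/- Let ε ∈ (0,1], let k, n ∈ ℕ with 1 ≤ k ≤ n, and let s, ŝ ∈ [0,1]^n with 0 ≤ ŝ_i − s_i ≤ ε for all i. Let x, y ≥ 0 and define p_i = max(s_i − x, 0) and q_i = max(ŝ_i − y, 0), and assume ∑_{i=1}^n p_i = ∑_{i=1}^n q_i = k. Then x ≤ y ≤ x + ε, and consequently |p_i − q_i| ≤ ε for every i. -/
/-- Stability of downward water-filling under rounding the scores up by at most `ε`: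
the shift constants satisfy `x ≤ y ≤ x + ε` and the resulting marginals differ by
at most `ε` coordinatewise. -/
theorem waterfill_down_stability (ε : ℝ) (hε : 0 < ε) (hε1 : ε ≤ 1)
    (k n : ℕ) (hk : 1 ≤ k) (hkn : k ≤ n)
    (s shat : Fin n → ℝ) (hs : ∀ i, 0 ≤ s i ∧ s i ≤ 1)
    (hshat : ∀ i, 0 ≤ shat i ∧ shat i ≤ 1)
    (hround : ∀ i, 0 ≤ shat i - s i ∧ shat i - s i ≤ ε)
    (x y : ℝ) (hx : 0 ≤ x) (hy : 0 ≤ y)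
    (p q : Fin n → ℝ) (hp : ∀ i, p i = max (s i - x) 0)
    (hq : ∀ i, q i = max (shat i - y) 0)
    (hpk : ∑ i, p i = k) (hqk : ∑ i, q i = k) :
    x ≤ y ∧ y ≤ x + ε ∧ ∀ i, |p i - q i| ≤ ε := by
  have hk1 : (1:ℝ) ≤ (k:ℝ) := by exact_mod_cast hk
  have hxy : x ≤ y := by
    by_contra hlt
    push_neg at hlt
    have hle : ∀ i ∈ Finset.univ, p i ≤ q i := by
      intro i _
      rw [hp, hq]
      exact max_le_max (by linarith [(hround i).1]) le_rfl
    have heq : ∀ i ∈ Finset.univ, p i = q i :=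
      (Finset.sum_eq_sum_iff_of_le hle).mp (by rw [hpk, hqk])
    obtain ⟨i, hi⟩ : ∃ i, 0 < q i := by
      by_contra hall
      push_neg at hall
      have hs0 : ∑ i, q i ≤ 0 := Finset.sum_nonpos (fun i _ => hall i)
      rw [hqk] at hs0
      linarith
    have hqi : q i = shat i - y := by
      rw [hq] at hi ⊢
      rcases max_cases (shat i - y) 0 with ⟨h1, h2⟩ | ⟨h1, h2⟩ <;> linarith
    have hpi := heq i (Finset.mem_univ i)
    rw [hp i, hqi] at hpi
    have h1 : s i - x < shat i - y := by linarith [(hround i).1]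
    have h2 : max (s i - x) 0 < shat i - y := by
      rw [hqi] at hi
      exact max_lt h1 hi
    linarith
  have hyx : y ≤ x + ε := by
    by_contra hlt
    push_neg at hlt
    have hle : ∀ i ∈ Finset.univ, q i ≤ p i := by
      intro i _
      rw [hp, hq]
      exact max_le_max (by linarith [(hround i).2]) le_rfl
    have heq : ∀ i ∈ Finset.univ, q i = p i :=
      (Finset.sum_eq_sum_iff_of_le hle).mp (by rw [hpk, hqk])
    obtain ⟨i, hi⟩ : ∃ i, 0 < p i := by
      by_contra hall
      push_neg at hall
      have hs0 : ∑ i, p i ≤ 0 := Finset.sum_nonpos (fun i _ => hall i)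
      rw [hpk] at hs0
      linarith
    have hpi : p i = s i - x := by
      rw [hp] at hi ⊢
      rcases max_cases (s i - x) 0 with ⟨h1, h2⟩ | ⟨h1, h2⟩ <;> linarith
    have hqi := heq i (Finset.mem_univ i)
    rw [hq i, hpi] at hqi
    have h1 : shat i - y < s i - x := by linarith [(hround i).2]
    have h2 : max (shat i - y) 0 < s i - x := by
      rw [hpi] at hi
      exact max_lt h1 hi
    linarith
  refine ⟨hxy, hyx, fun i => ?_⟩
  rw [hp, hq, abs_le]
  have hr1 := (hround i).1
  have hr2 := (hround i).2
  constructor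
  · have h1 : max (shat i - y) 0 ≤ max (s i - x) 0 + ε :=
      max_le (by linarith [le_max_left (s i - x) (0:ℝ)])
        (by linarith [le_max_right (s i - x) (0:ℝ)])
    linarith
  · have h2 : max (s i - x) 0 ≤ max (shat i - y) 0 + ε :=
      max_le (by linarith [le_max_left (shat i - y) (0:ℝ)])
        (by linarith [le_max_right (shat i - y) (0:ℝ)])
    linarith
end

section
/- Let ε ∈ (0,1], let k, n ∈ ℕ with 1 ≤ k ≤ n, and let s, ŝ ∈ [0,1]^n with 0 ≤ ŝ_i − s_i ≤ ε for all i. Let x, y ≥ 0, define p_i = min(s_i + x, 1) and q_i = min(ŝ_i + y, 1), and assume ∑_{i=1}^n p_i = ∑_{i=1}^n q_i = k. Then ∑_{i=1}^n q_i s_i ≥ ∑_{i=1}^n p_i s_i − k(ε + 2√ε). That is, the linear utility of the water-filling solution computed on the rounded scores is within an additive k(ε + 2√ε) of the linear utility of the water-filling solution computed on the original scores. -/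
/-- Utility loss from rounding, upward case: the linear utility (w.r.t. the original
scores `s`) of the upward water-filling solution for the rounded scores `shat` is
within `k(ε + 2√ε)` of that of the water-filling solution for `s`. -/
theorem waterfill_up_utility_loss (ε : ℝ) (hε : 0 < ε) (hε1 : ε ≤ 1)
    (k n : ℕ) (hk : 1 ≤ k) (hkn : k ≤ n)
    (s shat : Fin n → ℝ) (hs : ∀ i, 0 ≤ s i ∧ s i ≤ 1)
    (hshat : ∀ i, 0 ≤ shat i ∧ shat i ≤ 1)
    (hround : ∀ i, 0 ≤ shat i - s i ∧ shat i - s i ≤ ε)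
    (x y : ℝ) (hx : 0 ≤ x) (hy : 0 ≤ y)
    (p q : Fin n → ℝ) (hp : ∀ i, p i = min (s i + x) 1)
    (hq : ∀ i, q i = min (shat i + y) 1)
    (hpk : ∑ i, p i = k) (hqk : ∑ i, q i = k) :
    ∑ i, q i * s i ≥ ∑ i, p i * s i - k * (ε + 2 * Real.sqrt ε) := by
  have hsqrt : 0 ≤ Real.sqrt ε := Real.sqrt_nonneg ε
  have hkpos : (0:ℝ) ≤ (k:ℝ) := by positivity
  by_cases hcase : x - y ≤ ε
  · -- q i ≥ p i - ε pointwise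
    have key : ∀ i, p i - ε ≤ q i := by
      intro i
      rw [hp i, hq i]
      have h1 := (hround i).1
      rcases le_total x y with h | h
      · have : min (s i + x) 1 ≤ min (shat i + y) 1 :=
          min_le_min (by linarith) le_rfl
        linarith
      · have : min (s i + x) 1 - (x - y) ≤ min (shat i + y) 1 := by
          simp only [min_def]
          split_ifs <;> linarith
        linarith
    have hsum_s_le : ∑ i, s i ≤ (k:ℝ) := by
      rw [← hpk]
      apply Finset.sum_le_sum
      intro i _
      rw [hp i]
      exact le_min (by linarith [(hs i).1]) (hs i).2
    have hsum_s_nonneg : 0 ≤ ∑ i, s i :=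
      Finset.sum_nonneg fun i _ => (hs i).1
    have h1 : ∑ i, (p i - ε) * s i ≤ ∑ i, q i * s i := by
      apply Finset.sum_le_sum
      intro i _
      exact mul_le_mul_of_nonneg_right (key i) (hs i).1
    have h2 : ∑ i, (p i - ε) * s i = ∑ i, p i * s i - ε * ∑ i, s i := by
      rw [Finset.mul_sum, ← Finset.sum_sub_distrib]
      exact Finset.sum_congr rfl fun i _ => by ring
    have h3 : ε * ∑ i, s i ≤ (k:ℝ) * (ε + 2 * Real.sqrt ε) := by
      nlinarith [mul_le_mul_of_nonneg_left hsum_s_le hε.le,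
        mul_nonneg hkpos hsqrt]
    rw [h2] at h1
    linarith
  · -- q i ≤ p i pointwise, so equality everywhere
    push_neg at hcase
    have hle : ∀ i ∈ Finset.univ, q i ≤ p i := by
      intro i _
      rw [hp i, hq i]
      have h1 := (hround i).2
      exact min_le_min (by linarith) le_rfl
    have heq : ∀ i ∈ Finset.univ, q i = p i :=
      (Finset.sum_eq_sum_iff_of_le hle).mp (hqk.trans hpk.symm)
    have : ∑ i, q i * s i = ∑ i, p i * s i :=
      Finset.sum_congr rfl fun i hi => by rw [heq i hi]
    have hpos : 0 ≤ (k:ℝ) * (ε + 2 * Real.sqrt ε) := by positivity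
    linarith
end

section
/- Let ε ∈ (0,1], let k, n ∈ ℕ with 1 ≤ k ≤ n, and let s, ŝ ∈ [0,1]^n with 0 ≤ ŝ_i − s_i ≤ ε for all i. Let x, y ≥ 0, define p_i = max(s_i − x, 0) and q_i = max(ŝ_i − y, 0), and assume ∑_{i=1}^n p_i = ∑_{i=1}^n q_i = k. Then ∑_{i=1}^n q_i s_i ≥ ∑_{i=1}^n p_i s_i − k(ε + 2√ε). -/
/-!
Since both allocations have total mass `k`, the loss `∑ (p i - q i) * s i` equals
`∑ (p i - q i) * (s i - x)`. If `y ≤ x` or `x + ε ≤ y`, one allocation dominates the other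
pointwise, so equal totals force `p = q`. Otherwise the clipped arguments `s i - x` and
`shat i - y` differ by at most `ε`, and each term is at most `ε * (p i + q i)`; summing gives a
loss of at most `2 ε k ≤ k (ε + 2 √ε)`.
-/

open Finset

def waterfill {ι : Type*} (s : ι → ℝ) (x : ℝ) (i : ι) : ℝ := max (s i - x) 0

lemma waterfill_le_waterfill {ι : Type*} {s t : ι → ℝ} {x y : ℝ}
    (h : ∀ i, s i - x ≤ t i - y) (i : ι) :
    waterfill s x i ≤ waterfill t y i :=
  max_le_max (h i) le_rfl

lemma max_sub_max_mul_le {u v ε : ℝ} (h : |v - u| ≤ ε) :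
    (max u 0 - max v 0) * u ≤ ε * (max u 0 + max v 0) := by
  rw [abs_sub_le_iff] at h
  rcases max_cases u 0 with ⟨hu, hu0⟩ | ⟨hu, hu0⟩ <;>
    rcases max_cases v 0 with ⟨hv, hv0⟩ | ⟨hv, hv0⟩ <;> rw [hu, hv] <;>
    nlinarith

section Sums

variable {ι : Type*} [Fintype ι]

lemma sum_mul_sub_sum_mul_eq_of_sum_eq {p q : ι → ℝ} (h : ∑ i, p i = ∑ i, q i)
    (s : ι → ℝ) (x : ℝ) :
    ∑ i, p i * s i - ∑ i, q i * s i = ∑ i, (p i - q i) * (s i - x) := by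
  simp only [sub_mul, mul_sub, sum_sub_distrib, ← sum_mul, h]
  ring

lemma sum_mul_eq_of_le_of_sum_eq {p q : ι → ℝ} (hle : ∀ i, p i ≤ q i)
    (h : ∑ i, p i = ∑ i, q i) (s : ι → ℝ) : ∑ i, p i * s i = ∑ i, q i * s i := by
  have hpq := (sum_eq_sum_iff_of_le fun i _ => hle i).1 h
  exact sum_congr rfl fun i hi => by rw [hpq i hi]

lemma sum_waterfill_mul_sub_le_of_abs_sub_le {s t : ι → ℝ} {x y ε : ℝ}
    (h : ∀ i, |(t i - y) - (s i - x)| ≤ ε)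
    (hsum : ∑ i, waterfill s x i = ∑ i, waterfill t y i) :
    ∑ i, waterfill s x i * s i - ∑ i, waterfill t y i * s i ≤
      ε * (∑ i, waterfill s x i + ∑ i, waterfill t y i) := by
  calc ∑ i, waterfill s x i * s i - ∑ i, waterfill t y i * s i
      = ∑ i, (waterfill s x i - waterfill t y i) * (s i - x) :=
        sum_mul_sub_sum_mul_eq_of_sum_eq hsum s x
    _ ≤ ∑ i, ε * (waterfill s x i + waterfill t y i) :=
        sum_le_sum fun i _ => max_sub_max_mul_le (h i)
    _ = ε * (∑ i, waterfill s x i + ∑ i, waterfill t y i) := by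
        rw [← mul_sum, sum_add_distrib]

lemma sum_waterfill_mul_sub_le {s t : ι → ℝ} {x y ε : ℝ} (hε : 0 ≤ ε)
    (hst : ∀ i, 0 ≤ t i - s i ∧ t i - s i ≤ ε)
    (hsum : ∑ i, waterfill s x i = ∑ i, waterfill t y i) :
    ∑ i, waterfill s x i * s i - ∑ i, waterfill t y i * s i ≤
      2 * ε * ∑ i, waterfill s x i := by
  have hnonneg : 0 ≤ 2 * ε * ∑ i, waterfill s x i :=
    mul_nonneg (by positivity) (sum_nonneg fun i _ => le_max_right _ _)
  rcases le_total y x with hyx | hxy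
  · have hle i : s i - x ≤ t i - y := by linarith [(hst i).1]
    rw [sum_mul_eq_of_le_of_sum_eq (waterfill_le_waterfill hle) hsum, sub_self]
    exact hnonneg
  rcases le_total (x + ε) y with hxεy | hyxε
  · have hle i : t i - y ≤ s i - x := by linarith [(hst i).2]
    rw [sum_mul_eq_of_le_of_sum_eq (waterfill_le_waterfill hle) hsum.symm, sub_self]
    exact hnonneg
  have hclose i : |(t i - y) - (s i - x)| ≤ ε :=
    abs_sub_le_iff.2 ⟨by linarith [hst i], by linarith [hst i]⟩
  calc _ ≤ ε * (∑ i, waterfill s x i + ∑ i, waterfill t y i) :=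
        sum_waterfill_mul_sub_le_of_abs_sub_le hclose hsum
    _ = 2 * ε * ∑ i, waterfill s x i := by rw [← hsum]; ring

end Sums

theorem waterfill_down_utility_loss_general (ε : ℝ) (hε : 0 < ε) (hε1 : ε ≤ 1)
    (k n : ℕ)
    (s shat : Fin n → ℝ)
    (hround : ∀ i, 0 ≤ shat i - s i ∧ shat i - s i ≤ ε)
    (x y : ℝ)
    (p q : Fin n → ℝ) (hp : ∀ i, p i = max (s i - x) 0)
    (hq : ∀ i, q i = max (shat i - y) 0)
    (hpk : ∑ i, p i = k) (hqk : ∑ i, q i = k) :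
    ∑ i, q i * s i ≥ ∑ i, p i * s i - k * (ε + 2 * Real.sqrt ε) := by
  obtain rfl : p = waterfill s x := funext hp
  obtain rfl : q = waterfill shat y := funext hq
  have hloss := sum_waterfill_mul_sub_le hε.le hround (hpk.trans hqk.symm)
  have hε_le_sqrt : ε ≤ Real.sqrt ε := Real.le_sqrt_self_iff.2 hε1
  have hslack : 0 ≤ (k : ℝ) * (2 * Real.sqrt ε - ε) :=
    mul_nonneg k.cast_nonneg (by linarith [Real.sqrt_nonneg ε])
  rw [hpk] at hloss
  linarith

/-- Utility loss from rounding, downward case: the linear utility (w.r.t. the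
original scores `s`) of the downward water-filling solution for the rounded scores
`shat` is within `k(ε + 2√ε)` of that of the water-filling solution for `s`. -/
theorem waterfill_down_utility_loss (ε : ℝ) (hε : 0 < ε) (hε1 : ε ≤ 1)
    (k n : ℕ) (hk : 1 ≤ k) (hkn : k ≤ n)
    (s shat : Fin n → ℝ) (hs : ∀ i, 0 ≤ s i ∧ s i ≤ 1)
    (hshat : ∀ i, 0 ≤ shat i ∧ shat i ≤ 1)
    (hround : ∀ i, 0 ≤ shat i - s i ∧ shat i - s i ≤ ε)
    (x y : ℝ) (hx : 0 ≤ x) (hy : 0 ≤ y)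
    (p q : Fin n → ℝ) (hp : ∀ i, p i = max (s i - x) 0)
    (hq : ∀ i, q i = max (shat i - y) 0)
    (hpk : ∑ i, p i = k) (hqk : ∑ i, q i = k) :
    ∑ i, q i * s i ≥ ∑ i, p i * s i - k * (ε + 2 * Real.sqrt ε) :=
  waterfill_down_utility_loss_general ε hε hε1 k n s shat hround x y p q hp hq hpk hqk
end

section
/- Let k, n ∈ ℕ with 1 ≤ k ≤ n, let s_1,…,s_n ∈ (0,1] with ∑_i s_i ≤ k, let c ≥ 0, and define p_i = min(s_i + c, 1), assuming ∑_{i=1}^n p_i = k. Then for every vector q ∈ [0,1]^n satisfying ∑_{i=1}^n q_i ≤ k and |q_i − q_j| ≤ |s_i − s_j| for all i, j, one has min_{i} (q_i/s_i) ≤ min_{i} (p_i/s_i). That is, the upward water-filling solution maximizes the max–min (ratio) utility among all fairness-preserving marginal selection probability vectors. -/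
/-!
The ratio `min (x + c) 1 / x` is antitone in `x > 0` when `c ≥ 0`, so the utility of the
water-filling vector `p` is attained at an index `i₀` of maximal score. Any fairness-preserving
`q` has `q i₀ ≤ p i₀`: if `p i₀ = 1` this is `q i₀ ≤ 1`, and otherwise `q i₀ > s i₀ + c` would
force `q i ≥ q i₀ - (s i₀ - s i) > s i + c ≥ p i` for every `i`, so `∑ q > ∑ p = k`.
Hence `⨅ q / s ≤ q i₀ / s i₀ ≤ p i₀ / s i₀ = ⨅ p / s`.
-/

open Finset

lemma min_add_one_div_le_min_add_one_div {a b c : ℝ} (hc : 0 ≤ c) (ha : 0 < a) (hab : a ≤ b) :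
    min (b + c) 1 / b ≤ min (a + c) 1 / a := by
  have hb : 0 < b := ha.trans_le hab
  rw [← min_div_div_right hb.le, ← min_div_div_right ha.le, add_div, add_div,
    div_self hb.ne', div_self ha.ne']
  gcongr

lemma le_min_add_one_of_sum_le {ι : Type*} [Fintype ι] {s p q : ι → ℝ} {c : ℝ} {i₀ : ι}
    (hp : ∀ i, p i = min (s i + c) 1) (hq : ∀ i, q i ≤ 1) (hqp : ∑ i, q i ≤ ∑ i, p i)
    (hfair : ∀ i, q i₀ - q i ≤ s i₀ - s i) : q i₀ ≤ p i₀ := by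
  by_contra! hlt
  rcases min_choice (s i₀ + c) 1 with h | h <;> rw [← hp] at h
  · have hpq : ∀ i ∈ univ, p i < q i := fun i _ => by
      linarith [hp i ▸ min_le_left (s i + c) 1, hfair i]
    exact (sum_lt_sum_of_nonempty ⟨i₀, mem_univ _⟩ hpq).not_ge hqp
  · exact (hq i₀).not_gt (h ▸ hlt)

theorem waterfill_up_optimal_ratio_general (k n : ℕ)
    (s : Fin n → ℝ) (hs : ∀ i, 0 < s i ∧ s i ≤ 1)
    (c : ℝ) (hc : 0 ≤ c) (p : Fin n → ℝ) (hp : ∀ i, p i = min (s i + c) 1)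
    (hpk : ∑ i, p i = k) :
    ∀ q : Fin n → ℝ, (∀ i, 0 ≤ q i ∧ q i ≤ 1) → (∑ i, q i ≤ k) →
      (∀ i j, |q i - q j| ≤ |s i - s j|) →
      (⨅ i, q i / s i) ≤ ⨅ i, p i / s i := by
  intro q hq hqk hfair
  rcases isEmpty_or_nonempty (Fin n) with hn | hn
  · simp only [Real.iInf_of_isEmpty, le_refl]
  obtain ⟨i₀, hmax⟩ := Finite.exists_max s
  have hq₀ : q i₀ ≤ p i₀ :=
    le_min_add_one_of_sum_le hp (fun i => (hq i).2) (hpk ▸ hqk) fun i =>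
      (le_abs_self _).trans ((hfair i₀ i).trans (abs_of_nonneg (sub_nonneg.2 (hmax i))).le)
  calc ⨅ i, q i / s i ≤ q i₀ / s i₀ := ciInf_le (Finite.bddBelow_range _) i₀
    _ ≤ p i₀ / s i₀ := div_le_div_of_nonneg_right hq₀ (hs i₀).1.le
    _ ≤ ⨅ i, p i / s i := le_ciInf fun i => by
      rw [hp, hp]
      exact min_add_one_div_le_min_add_one_div hc (hs i).1 (hmax i)

/-- Optimality of upward water-filling for max–min (ratio) utility: if `∑ s ≤ k`
and `p i = min (s i + c) 1` sums to `k`, then `p` maximizes `⨅ i, q i / s i` over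
all fairness-preserving marginal vectors `q ∈ [0,1]^n` with `∑ q ≤ k`. -/
theorem waterfill_up_optimal_ratio (k n : ℕ) (hk : 1 ≤ k) (hkn : k ≤ n)
    (s : Fin n → ℝ) (hs : ∀ i, 0 < s i ∧ s i ≤ 1) (hsum : ∑ i, s i ≤ k)
    (c : ℝ) (hc : 0 ≤ c) (p : Fin n → ℝ) (hp : ∀ i, p i = min (s i + c) 1)
    (hpk : ∑ i, p i = k) :
    ∀ q : Fin n → ℝ, (∀ i, 0 ≤ q i ∧ q i ≤ 1) → (∑ i, q i ≤ k) →
      (∀ i j, |q i - q j| ≤ |s i - s j|) →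
      (⨅ i, q i / s i) ≤ ⨅ i, p i / s i :=
  waterfill_up_optimal_ratio_general k n s hs c hc p hp hpk
end

section
/- Let k, n ∈ ℕ with 1 ≤ k ≤ n, let s_1,…,s_n ∈ [0,1], and let q ∈ [0,1]^n satisfy ∑_{i=1}^n q_i ≤ k and |q_i − q_j| ≤ |s_i − s_j| for all i, j. Then there exists d ≥ 0 such that the vector q' defined by q'_i = min(q_i + d, 1) satisfies: ∑_{i=1}^n q'_i = k, |q'_i − q'_j| ≤ |s_i − s_j| for all i, j, q'_i ≥ q_i for all i, and ∑_{i=1}^n q'_i s_i ≥ ∑_{i=1}^n q_i s_i. In particular, the optimal fairness-preserving linear utility is attained by a vector whose coordinates sum exactly to k. -/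
lemma min_one_lip (a b : ℝ) : |min a 1 - min b 1| ≤ |a - b| := by
  have h1 := le_abs_self (a - b)
  have h2 := neg_abs_le (a - b)
  rcases le_total a 1 with ha | ha <;> rcases le_total b 1 with hb | hb <;>
    rw [abs_le] <;> constructor <;>
    simp [min_eq_left, min_eq_right, ha, hb] <;> linarith

/-- Saturating the cardinality constraint: any fairness-preserving marginal vector
`q` with `∑ q ≤ k` can be shifted up (and clipped at 1) to a fairness-preserving
vector `q'` summing exactly to `k`, dominating `q` coordinatewise and with at least
as much linear utility. -/
theorem saturate_cardinality_constraint (k n : ℕ) (hk : 1 ≤ k) (hkn : k ≤ n)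
    (s : Fin n → ℝ) (hs : ∀ i, 0 ≤ s i ∧ s i ≤ 1)
    (q : Fin n → ℝ) (hq : ∀ i, 0 ≤ q i ∧ q i ≤ 1) (hqk : ∑ i, q i ≤ k)
    (hfair : ∀ i j, |q i - q j| ≤ |s i - s j|) :
    ∃ d : ℝ, 0 ≤ d ∧
      (∑ i, min (q i + d) 1 = k) ∧
      (∀ i j, |min (q i + d) 1 - min (q j + d) 1| ≤ |s i - s j|) ∧
      (∀ i, q i ≤ min (q i + d) 1) ∧
      (∑ i, q i * s i ≤ ∑ i, min (q i + d) 1 * s i) := by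
  set f : ℝ → ℝ := fun d => ∑ i, min (q i + d) 1 with hf
  have hcont : Continuous f :=
    continuous_finset_sum _ fun i _ => (continuous_const.add continuous_id).min continuous_const
  have hf0 : f 0 = ∑ i, q i := by
    simp only [hf, add_zero]
    exact Finset.sum_congr rfl fun i _ => min_eq_left (hq i).2
  have hf1 : f 1 = n := by
    simp only [hf]
    rw [Finset.sum_congr rfl fun i _ => min_eq_right (by linarith [(hq i).1] : (1:ℝ) ≤ q i + 1)]
    simp
  have hmem : (k : ℝ) ∈ Set.Icc (f 0) (f 1) := by
    constructor
    · rw [hf0]; exact hqk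
    · rw [hf1]; exact_mod_cast hkn
  obtain ⟨d, hd01, hdk⟩ := intermediate_value_Icc (by norm_num : (0:ℝ) ≤ 1)
    hcont.continuousOn hmem
  refine ⟨d, hd01.1, hdk, ?_, ?_, ?_⟩
  · intro i j
    calc |min (q i + d) 1 - min (q j + d) 1| ≤ |(q i + d) - (q j + d)| := min_one_lip _ _
      _ = |q i - q j| := by ring_nf
      _ ≤ |s i - s j| := hfair i j
  · intro i
    exact le_min (by linarith [hd01.1]) (hq i).2
  · apply Finset.sum_le_sum
    intro i _
    exact mul_le_mul_of_nonneg_right (le_min (by linarith [hd01.1]) (hq i).2) (hs i).1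
end

section
/- Let G be a finite index set, and for each g ∈ G let n_g ∈ ℕ and s_g ∈ (0,1], with ∑_{g∈G} n_g · s_g = k for a real number k > 0. Then ∑_{g∈G} ⌈ n_g / ⌊1/s_g⌋ ⌉ ≤ 2k + |G|. In particular, if |G| ≤ ⌈1/ε⌉ + 1 for some ε ∈ (0,1], the total is at most 2k + ⌈1/ε⌉ + 1. -/
/-! Since `s ≤ 1`, the integer `⌊1/s⌋` is at least half of `1/s`, so a group of `n` candidates
needs at most `n / ⌊1/s⌋ + 1 ≤ 2 n s + 1` representatives; summing over the groups gives
`2k + |G|`. -/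

lemma ceil_div_floor_one_div_le {m t : ℝ} (hm : 0 ≤ m) (ht₀ : 0 < t) (ht₁ : t ≤ 1) :
    (⌈m / ⌊1 / t⌋₊⌉₊ : ℝ) ≤ 2 * m * t + 1 := by
  have h_one_le : 1 ≤ 1 / t := by rwa [le_div_iff₀ ht₀, one_mul]
  have h_half_lt : 1 / t / 2 < ⌊1 / t⌋₊ := Nat.div_two_lt_floor h_one_le
  have h_div_le : m / ⌊1 / t⌋₊ ≤ 2 * m * t :=
    calc m / ⌊1 / t⌋₊ ≤ m / (1 / t / 2) :=
          div_le_div_of_nonneg_left hm (by positivity) h_half_lt.le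
      _ = 2 * m * t := by field_simp
  linarith [Nat.ceil_lt_add_one (div_nonneg hm (Nat.cast_nonneg ⌊1 / t⌋₊))]

theorem pending_candidates_bound_general (G : Type*) [Fintype G] (n : G → ℕ) (s : G → ℝ)
    (hs : ∀ g, 0 < s g ∧ s g ≤ 1) (k : ℝ)
    (hsum : ∑ g, (n g : ℝ) * s g = k) :
    (∑ g, (⌈(n g : ℝ) / (⌊1 / s g⌋₊ : ℝ)⌉₊ : ℝ)) ≤ 2 * k + Fintype.card G ∧
    (∀ ε : ℝ, 0 < ε → ε ≤ 1 → Fintype.card G ≤ ⌈1 / ε⌉₊ + 1 →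
      (∑ g, (⌈(n g : ℝ) / (⌊1 / s g⌋₊ : ℝ)⌉₊ : ℝ)) ≤ 2 * k + (⌈1 / ε⌉₊ : ℝ) + 1) := by
  have hmain : (∑ g, (⌈(n g : ℝ) / (⌊1 / s g⌋₊ : ℝ)⌉₊ : ℝ)) ≤ 2 * k + Fintype.card G :=
    calc (∑ g, (⌈(n g : ℝ) / (⌊1 / s g⌋₊ : ℝ)⌉₊ : ℝ))
        ≤ ∑ g, (2 * (n g : ℝ) * s g + 1) := Finset.sum_le_sum fun g _ =>
          ceil_div_floor_one_div_le (Nat.cast_nonneg _) (hs g).1 (hs g).2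
      _ = 2 * k + Fintype.card G := by
          simp only [Finset.sum_add_distrib, mul_assoc, ← Finset.mul_sum, hsum,
            Finset.sum_const, Finset.card_univ, nsmul_eq_mul, mul_one]
  refine ⟨hmain, fun ε _ _ hcard => ?_⟩
  have hcard' : (Fintype.card G : ℝ) ≤ ⌈1 / ε⌉₊ + 1 := by exact_mod_cast hcard
  linarith

/-- Bound on pending candidates: with `n g` candidates in group `g`, each at current
marginal probability `s g ∈ (0,1]`, and `∑ g, n g * s g = k`, the total number of
pending representatives `∑ g, ⌈ n g / ⌊1 / s g⌋ ⌉` is at most `2k + |G|`; in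
particular at most `2k + ⌈1/ε⌉ + 1` when `|G| ≤ ⌈1/ε⌉ + 1`. -/
theorem pending_candidates_bound (G : Type*) [Fintype G] (n : G → ℕ) (s : G → ℝ)
    (hs : ∀ g, 0 < s g ∧ s g ≤ 1) (k : ℝ) (hk : 0 < k)
    (hsum : ∑ g, (n g : ℝ) * s g = k) :
    (∑ g, (⌈(n g : ℝ) / (⌊1 / s g⌋₊ : ℝ)⌉₊ : ℝ)) ≤ 2 * k + Fintype.card G ∧
    (∀ ε : ℝ, 0 < ε → ε ≤ 1 → Fintype.card G ≤ ⌈1 / ε⌉₊ + 1 →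
      (∑ g, (⌈(n g : ℝ) / (⌊1 / s g⌋₊ : ℝ)⌉₊ : ℝ)) ≤ 2 * k + (⌈1 / ε⌉₊ : ℝ) + 1) :=
  pending_candidates_bound_general G n s hs k hsum
end
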